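/- Let μ be a partition, let R be the weight of one of its removable corners, let ν be μ with that corner removed, and let c_R = (qt·R/M)·∏_{A}(1 − A/(qt·R)) / ∏_{R'≠R}(1 − R'/R), the products running over the weights A of all addable corners of μ and over the weights R' of the removable corners of μ other than R. Then in ℚ(q,t): c_R = R·(1 − 1/(qt·R))/(1 − 1/(qt)) · ∏_{c∈ν} [(1 − w(c)/(q·R))·(1 − w(c)/(t·R))] / [(1 − w(c)/R)·(1 − w(c)/(qt·R))]. (This product over the cells of ν is the corner-formula form of the factor Ω[(M/qt)·B_ν/R] appearing in the standard-tableau expansions.) -/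

import Mathlib

open scoped Classical
open PowerSeries

noncomputable section

abbrev K := FractionRing (MvPolynomial (Fin 2) ℚ)

def q : K := algebraMap (MvPolynomial (Fin 2) ℚ) K (MvPolynomial.X 0)
def t : K := algebraMap (MvPolynomial (Fin 2) ℚ) K (MvPolynomial.X 1)

/-- the weight of a cell `(i,j)` (row `i`, column `j`) is `t^i * q^j` -/
def w (c : ℕ × ℕ) : K := t ^ c.1 * q ^ c.2

/-- `B_μ = Σ_{c ∈ μ} w(c)` -/
def Bsum (μ : YoungDiagram) : K := ∑ c ∈ μ.cells, w c

/-- a removable corner: a cell of `μ` whose removal leaves a Young diagram -/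
def IsRemovable (μ : YoungDiagram) (c : ℕ × ℕ) : Prop :=
  c ∈ μ ∧ IsLowerSet (↑(μ.cells.erase c) : Set (ℕ × ℕ))

/-- an addable corner: a cell not in `μ` whose addition gives a Young diagram -/
def IsAddable (μ : YoungDiagram) (c : ℕ × ℕ) : Prop :=
  c ∉ μ ∧ IsLowerSet (↑(insert c μ.cells) : Set (ℕ × ℕ))

/-- the arm of a cell: number of cells of `μ` strictly east of it in its row -/
def arm (μ : YoungDiagram) (c : ℕ × ℕ) : ℕ :=
  (μ.cells.filter fun d => d.1 = c.1 ∧ c.2 < d.2).card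

/-- the leg of a cell: number of cells of `μ` strictly north of it in its column -/
def leg (μ : YoungDiagram) (c : ℕ × ℕ) : ℕ :=
  (μ.cells.filter fun d => d.2 = c.2 ∧ c.1 < d.1).card

/-
Translating cells by `d` multiplies weights by `w d`, so it suffices to prove the identity of
multisets of cells `Add + μ + (μ + (1,1)) = {0} + (Rem + (1,1)) + (μ + (0,1)) + (μ + (1,0))`,
the multiplicative form of `∑ A - qt ∑ R = 1 - M B_μ`. It is checked cell by cell: the
multiplicity of a cell only depends on which of it and its three lower-left neighbours lie in `μ`.
The cell `r + (1,1)` occurs on both sides; after cancelling it, applying `p ↦ 1 - w p / (qt R)`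
gives a product identity without vanishing factors, and solving it for `∏ A / ∏ R'` is the claim.
-/

lemma isRemovable_iff (μ : YoungDiagram) (i j : ℕ) :
    IsRemovable μ (i, j) ↔ (i, j) ∈ μ ∧ (i + 1, j) ∉ μ ∧ (i, j + 1) ∉ μ := by
  have hlt : ∀ c : ℕ × ℕ, (i, j) < c → (i + 1, j) ≤ c ∨ (i, j + 1) ≤ c := by
    rintro ⟨a, b⟩ h
    simp only [Prod.lt_iff, Prod.mk_le_mk] at h ⊢
    omega
  rw [IsRemovable, Finset.coe_erase]
  refine ⟨fun ⟨hmem, hlow⟩ => ⟨hmem, fun h => ?_, fun h => ?_⟩, fun ⟨hmem, h₁, h₂⟩ => ⟨hmem, ?_⟩⟩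
  · exact (hlow (by simp : (i, j) ≤ (i + 1, j)) ⟨h, by simp⟩).2 rfl
  · exact (hlow (by simp : (i, j) ≤ (i, j + 1)) ⟨h, by simp⟩).2 rfl
  · refine μ.isLowerSet.erase fun c hc hle => by_contra fun hne => ?_
    rcases hlt c (lt_of_le_of_ne hle (Ne.symm hne)) with h | h
    exacts [h₁ (μ.isLowerSet h hc), h₂ (μ.isLowerSet h hc)]

lemma isAddable_iff (μ : YoungDiagram) (i j : ℕ) :
    IsAddable μ (i, j) ↔ (i, j) ∉ μ ∧ (∀ i', i = i' + 1 → (i', j) ∈ μ) ∧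
      (∀ j', j = j' + 1 → (i, j') ∈ μ) := by
  have hlt : ∀ c : ℕ × ℕ, c < (i, j) →
      (∃ i', i = i' + 1 ∧ c ≤ (i', j)) ∨ (∃ j', j = j' + 1 ∧ c ≤ (i, j')) := by
    rintro ⟨a, b⟩ h
    simp only [Prod.lt_iff, Prod.mk_le_mk] at h ⊢
    rcases h with ⟨h1, h2⟩ | ⟨h1, h2⟩
    · exact Or.inl ⟨i - 1, by omega, by omega, h2⟩
    · exact Or.inr ⟨j - 1, by omega, h1, by omega⟩
  rw [IsAddable, Finset.coe_insert]
  refine ⟨fun ⟨hmem, hlow⟩ => ⟨hmem, ?_, ?_⟩, fun ⟨hmem, h₁, h₂⟩ => ⟨hmem, ?_⟩⟩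
  · rintro i' rfl
    exact (hlow (by simp : (i', j) ≤ (i' + 1, j)) (Set.mem_insert _ _)).resolve_left (by simp)
  · rintro j' rfl
    exact (hlow (by simp : (i, j') ≤ (i, j' + 1)) (Set.mem_insert _ _)).resolve_left (by simp)
  · rintro c d hdc (rfl | hc)
    · rcases eq_or_lt_of_le hdc with rfl | hlt'
      · exact Set.mem_insert _ _
      · right
        rcases hlt d hlt' with ⟨i', rfl, h⟩ | ⟨j', rfl, h⟩
        exacts [μ.isLowerSet h (h₁ i' rfl), μ.isLowerSet h (h₂ j' rfl)]
    · exact Or.inr (μ.isLowerSet hdc hc)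

lemma IsRemovable.add_one_one_notMem {μ : YoungDiagram} {r : ℕ × ℕ} (h : IsRemovable μ r) :
    r + (1, 1) ∉ μ := fun h' =>
  ((isRemovable_iff μ r.1 r.2).1 h).2.1 (μ.up_left_mem le_rfl r.2.le_succ h')

lemma Finset.count_val {α : Type*} [DecidableEq α] (s : Finset α) (a : α) :
    s.val.count a = if a ∈ s then 1 else 0 :=
  Multiset.count_eq_of_nodup s.nodup

lemma Finset.count_val_map_add_right {α : Type*} [AddCommMonoid α] [PartialOrder α]
    [CanonicallyOrderedAdd α] [Sub α] [OrderedSub α] [IsRightCancelAdd α] [DecidableEq α]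
    [DecidableLE α] (s : Finset α) (d p : α) :
    (s.val.map (· + d)).count p = if d ≤ p ∧ p - d ∈ s then 1 else 0 := by
  by_cases hd : d ≤ p
  · conv_lhs => rw [← tsub_add_cancel_of_le hd]
    rw [Multiset.count_map_eq_count' _ _ (add_left_injective d),
      Multiset.count_eq_of_nodup s.nodup]
    simp [hd]
  · rw [if_neg (fun h => hd h.1), Multiset.count_eq_zero]
    simp only [Multiset.mem_map, not_exists, not_and]
    exact fun a _ h => hd (h ▸ le_add_self)

theorem addable_add_cells_add_shift_eq (μ : YoungDiagram) (Rem Add : Finset (ℕ × ℕ))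
    (hRem : ∀ x, x ∈ Rem ↔ IsRemovable μ x) (hAdd : ∀ x, x ∈ Add ↔ IsAddable μ x) :
    Add.val + μ.cells.val + μ.cells.val.map (· + (1, 1)) =
      {0} + Rem.val.map (· + (1, 1)) + μ.cells.val.map (· + (0, 1)) +
        μ.cells.val.map (· + (1, 0)) := by
  ext ⟨_ | i, _ | j⟩
  all_goals
    simp only [Multiset.count_add, Multiset.count_singleton, Finset.count_val_map_add_right,
      Finset.count_val, hRem, hAdd, YoungDiagram.mem_cells]
    simp only [isRemovable_iff, isAddable_iff, Prod.mk_le_mk, Prod.mk_sub_mk, Prod.mk_eq_zero,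
      nonpos_iff_eq_zero, one_ne_zero, Nat.right_eq_add, Nat.add_eq_zero_iff, IsEmpty.forall_iff,
      implies_true, and_true, and_false, false_and, if_false]
  case zero.zero => split_ifs <;> rfl
  case zero.succ =>
    have : (0, j + 1) ∈ μ → (0, j) ∈ μ := μ.up_left_mem le_rfl j.le_succ
    split_ifs <;> simp_all
  case succ.zero =>
    have : (i + 1, 0) ∈ μ → (i, 0) ∈ μ := μ.up_left_mem i.le_succ le_rfl
    split_ifs <;> simp_all
  case succ.succ =>
    have : (i + 1, j + 1) ∈ μ → (i, j + 1) ∈ μ := μ.up_left_mem i.le_succ le_rfl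
    have : (i + 1, j + 1) ∈ μ → (i + 1, j) ∈ μ := μ.up_left_mem le_rfl j.le_succ
    have : (i, j + 1) ∈ μ → (i, j) ∈ μ := μ.up_left_mem le_rfl j.le_succ
    have : (i + 1, j) ∈ μ → (i, j) ∈ μ := μ.up_left_mem i.le_succ le_rfl
    split_ifs <;> simp_all

theorem addable_add_cells_add_shift_erase_eq (μ : YoungDiagram) (Rem Add : Finset (ℕ × ℕ))
    (hRem : ∀ x, x ∈ Rem ↔ IsRemovable μ x) (hAdd : ∀ x, x ∈ Add ↔ IsAddable μ x)
    {r : ℕ × ℕ} (hr : r ∈ Rem) {ν : YoungDiagram} (hν : ν.cells = μ.cells.erase r) :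
    Add.val + μ.cells.val + ν.cells.val.map (· + (1, 1)) =
      {0} + (Rem.erase r).val.map (· + (1, 1)) + μ.cells.val.map (· + (0, 1)) +
        μ.cells.val.map (· + (1, 0)) := by
  have shift_cons {s : Finset (ℕ × ℕ)} (hs : r ∈ s) :
      s.val.map (· + (1, 1)) = (r + (1, 1)) ::ₘ (s.erase r).val.map (· + (1, 1)) := by
    rw [Finset.erase_val, ← Multiset.map_cons (· + (1, 1)), Multiset.cons_erase hs]
  have h := addable_add_cells_add_shift_eq μ Rem Add hRem hAdd
  rw [shift_cons ((hRem r).1 hr).1, shift_cons hr, ← hν] at h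
  simpa only [Multiset.add_cons, Multiset.cons_add, Multiset.cons_inj_right] using h

theorem prod_addable_mul_prod_cells_eq {M : Type*} [CommMonoid M] (μ : YoungDiagram)
    (Rem Add : Finset (ℕ × ℕ)) (hRem : ∀ x, x ∈ Rem ↔ IsRemovable μ x)
    (hAdd : ∀ x, x ∈ Add ↔ IsAddable μ x) {r : ℕ × ℕ} (hr : r ∈ Rem) {ν : YoungDiagram}
    (hν : ν.cells = μ.cells.erase r) (f : ℕ × ℕ → M) :
    (∏ a ∈ Add, f a) * (∏ c ∈ μ.cells, f c) * ∏ c ∈ ν.cells, f (c + (1, 1)) =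
      f 0 * (∏ r' ∈ Rem.erase r, f (r' + (1, 1))) * (∏ c ∈ μ.cells, f (c + (0, 1))) *
        ∏ c ∈ μ.cells, f (c + (1, 0)) := by
  have h := congrArg (fun s => (s.map f).prod)
    (addable_add_cells_add_shift_erase_eq μ Rem Add hRem hAdd hr hν)
  simp only [Multiset.map_add, Multiset.prod_add, Multiset.map_map, Multiset.map_singleton,
    Multiset.prod_singleton, Function.comp_def] at h
  simpa only [Finset.prod_eq_multiset_prod] using h

lemma w_eq_algebraMap_monomial (c : ℕ × ℕ) :
    w c = algebraMap (MvPolynomial (Fin 2) ℚ) K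
      (MvPolynomial.monomial (Finsupp.single 1 c.1 + Finsupp.single 0 c.2) 1) := by
  rw [w, q, t, ← map_pow, ← map_pow, ← map_mul, MvPolynomial.X_pow_eq_monomial,
    MvPolynomial.X_pow_eq_monomial, MvPolynomial.monomial_mul, one_mul]

lemma w_injective : Function.Injective w := by
  intro a b hab
  simp only [w_eq_algebraMap_monomial] at hab
  have h := MvPolynomial.monomial_left_injective one_ne_zero
    (IsFractionRing.injective (MvPolynomial (Fin 2) ℚ) K hab)
  exact Prod.ext (by simpa using congrArg (· 1) h) (by simpa using congrArg (· 0) h)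

lemma w_ne_zero (c : ℕ × ℕ) : w c ≠ 0 := by
  rw [w_eq_algebraMap_monomial]
  exact (map_ne_zero_iff _ (IsFractionRing.injective _ K)).2
    (MvPolynomial.monomial_eq_zero.not.2 one_ne_zero)

lemma w_add (c d : ℕ × ℕ) : w (c + d) = w c * w d := by
  simp only [w, Prod.fst_add, Prod.snd_add, pow_add]
  ring

lemma w_zero : w 0 = 1 := by simp [w]

lemma w_zero_one : w (0, 1) = q := by simp [w]

lemma w_one_zero : w (1, 0) = t := by simp [w]

lemma w_one_one : w (1, 1) = q * t := by simp [w, mul_comm]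

lemma q_ne_zero : q ≠ 0 := w_zero_one ▸ w_ne_zero _

lemma t_ne_zero : t ≠ 0 := w_one_zero ▸ w_ne_zero _

lemma one_sub_w_div_ne_zero {a b : ℕ × ℕ} (h : a ≠ b) : 1 - w a / w b ≠ 0 := by
  rw [sub_ne_zero, ne_comm, Ne, div_eq_one_iff_eq (w_ne_zero b)]
  exact w_injective.ne h

lemma prod_one_sub_w_div_ne_zero {s : Finset (ℕ × ℕ)} {b : ℕ × ℕ} (hb : b ∉ s) :
    ∏ c ∈ s, (1 - w c / w b) ≠ 0 :=
  Finset.prod_ne_zero_iff.2 fun _ hc => one_sub_w_div_ne_zero (ne_of_mem_of_not_mem hc hb)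

lemma one_sub_w_ne_zero {c : ℕ × ℕ} (hc : c ≠ 0) : 1 - w c ≠ 0 := by
  simpa [w_zero] using one_sub_w_div_ne_zero hc

lemma one_sub_w_add_div (c d : ℕ × ℕ) {x y : K} (h : w d * x = y) :
    1 - w (c + d) / y = 1 - w c / x := by
  rw [← h, w_add, mul_comm (w d), mul_div_mul_right _ _ (w_ne_zero d)]

lemma one_sub_one_div_q_mul_t_ne_zero : 1 - 1 / (q * t) ≠ 0 := by
  simpa [w_zero, w_one_one] using one_sub_w_div_ne_zero (a := 0) (b := (1, 1)) (by decide)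

lemma one_sub_t_mul_one_sub_q_ne_zero : (1 - t) * (1 - q) ≠ 0 :=
  mul_ne_zero (w_one_zero ▸ one_sub_w_ne_zero (by decide))
    (w_zero_one ▸ one_sub_w_ne_zero (by decide))

lemma q_mul_t_mul_one_sub_one_div : q * t * ((1 - 1 / t) * (1 - 1 / q)) = (1 - t) * (1 - q) := by
  have := q_ne_zero
  have := t_ne_zero
  field_simp
  ring

theorem prod_addable_mul_prod_cells_eq_at_corner (μ : YoungDiagram)
    (Rem Add : Finset (ℕ × ℕ)) (hRem : ∀ x, x ∈ Rem ↔ IsRemovable μ x)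
    (hAdd : ∀ x, x ∈ Add ↔ IsAddable μ x) {r : ℕ × ℕ} (hr : r ∈ Rem) {ν : YoungDiagram}
    (hν : ν.cells = μ.cells.erase r) :
    (∏ a ∈ Add, (1 - w a / (q * t * w r))) *
        ((1 - 1 / (q * t)) * ∏ c ∈ ν.cells, (1 - w c / (q * t * w r))) *
        ∏ c ∈ ν.cells, (1 - w c / w r) =
      (1 - 1 / (q * t * w r)) * (∏ r' ∈ Rem.erase r, (1 - w r' / w r)) *
        ((1 - 1 / t) * ∏ c ∈ ν.cells, (1 - w c / (t * w r))) *
        ((1 - 1 / q) * ∏ c ∈ ν.cells, (1 - w c / (q * w r))) := by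
  have hrμ : r ∈ μ.cells := ((hRem r).1 hr).1
  have h := prod_addable_mul_prod_cells_eq μ Rem Add hRem hAdd hr hν
    (fun p => 1 - w p / (q * t * w r))
  rw [← Finset.mul_prod_erase μ.cells _ hrμ, ← Finset.mul_prod_erase μ.cells _ hrμ,
    ← Finset.mul_prod_erase μ.cells _ hrμ, ← hν] at h
  have e₁₁ (c : ℕ × ℕ) : 1 - w (c + (1, 1)) / (q * t * w r) = 1 - w c / w r :=
    one_sub_w_add_div c _ (by rw [w_one_one])
  have e₀₁ (c : ℕ × ℕ) : 1 - w (c + (0, 1)) / (q * t * w r) = 1 - w c / (t * w r) :=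
    one_sub_w_add_div c _ (by rw [w_zero_one]; ring)
  have e₁₀ (c : ℕ × ℕ) : 1 - w (c + (1, 0)) / (q * t * w r) = 1 - w c / (q * w r) :=
    one_sub_w_add_div c _ (by rw [w_one_zero]; ring)
  have e_r (x : K) : 1 - w r / (x * w r) = 1 - 1 / x := by
    simpa [w_zero] using one_sub_w_add_div 0 r (x := x) (mul_comm _ _)
  simp only [e₁₁, e₀₁, e₁₀, e_r, w_zero] at h
  linear_combination h

/-- the corner-weight `e₁^⊥`-Pieri coefficient `c_R` rewritten as a product
over the cells of `ν = μ ∖ {corner of weight R}` (the form `Ω[(M/qt)·B_ν/R]`). -/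
theorem stmt_9 (μ : YoungDiagram) (Rem Add : Finset (ℕ × ℕ))
    (hRem : ∀ x, x ∈ Rem ↔ IsRemovable μ x)
    (hAdd : ∀ x, x ∈ Add ↔ IsAddable μ x)
    (M : K) (hM : M = (1 - t) * (1 - q))
    (r : ℕ × ℕ) (hr : r ∈ Rem)
    (ν : YoungDiagram) (hν : ν.cells = μ.cells.erase r)
    (cR : K)
    (hcR : cR = q * t * w r / M * (∏ a ∈ Add, (1 - w a / (q * t * w r))) /
      ∏ r' ∈ Rem.erase r, (1 - w r' / w r)) :
    cR = w r * ((1 - 1 / (q * t * w r)) / (1 - 1 / (q * t))) *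
      ∏ s ∈ ν.cells,
        ((1 - w s / (q * w r)) * (1 - w s / (t * w r)) /
          ((1 - w s / w r) * (1 - w s / (q * t * w r)))) := by
  have hνμ : ν.cells ⊆ μ.cells := hν ▸ Finset.erase_subset r μ.cells
  have hD := prod_one_sub_w_div_ne_zero (Finset.notMem_erase r Rem)
  have hQ := prod_one_sub_w_div_ne_zero (hν ▸ Finset.notMem_erase r μ.cells)
  have hP := prod_one_sub_w_div_ne_zero (s := ν.cells)
    fun h => ((hRem r).1 hr).add_one_one_notMem ((μ.mem_cells _).1 (hνμ h))
  rw [w_add, w_one_one, mul_comm (w r)] at hP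
  have hM₀ : M ≠ 0 := hM ▸ one_sub_t_mul_one_sub_q_ne_zero
  have hqt := one_sub_one_div_q_mul_t_ne_zero
  have hqtM : q * t * ((1 - 1 / t) * (1 - 1 / q)) = M := hM ▸ q_mul_t_mul_one_sub_one_div
  have h := prod_addable_mul_prod_cells_eq_at_corner μ Rem Add hRem hAdd hr hν
  rw [hcR, Finset.prod_div_distrib, Finset.prod_mul_distrib, Finset.prod_mul_distrib]
  field_simp
  linear_combination q * t * w r * h + w r * (1 - 1 / (q * t * w r)) *
    (∏ r' ∈ Rem.erase r, (1 - w r' / w r)) * (∏ c ∈ ν.cells, (1 - w c / (t * w r))) *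
    (∏ c ∈ ν.cells, (1 - w c / (q * w r))) * hqtM
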